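/- Let ξ be any graph invariant which satisfies a zero-one law with respect to G(n, 1/2). Then for every δ > 0 there exists a SumGNN⁺ with random node features M (i.e. a choice of number of layers T, dimensions, weight matrices, biases, and classifier, whose non-linearity is the linearized sigmoid and whose initial node features are drawn i.i.d. with d independent U[0,1] coordinates per node) such that M uniformly δ-approximates ξ: for every n ∈ ℕ, when G ~ G(n, 1/2) and the random node features are sampled, Pr(M(G) = ξ(G)) ≥ 1 − δ. -/

import Mathlib

open MeasureTheory ProbabilityTheory Filter Topology
open scoped ENNReal

/-- Bernoulli measure on `Bool` with success probability `r` (for `r ∈ [0,1]`). -/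
noncomputable def bern (r : ℝ) : Measure Bool :=
  (PMF.bernoulli (min (Real.toNNReal r) 1) (min_le_right _ _)).toMeasure

instance (r : ℝ) : IsProbabilityMeasure (bern r) := by
  unfold bern; infer_instance

/-- Index type for the potential edges of a graph on `Fin n`. -/
abbrev EdgeIdx (n : ℕ) := {p : Fin n × Fin n // p.1 < p.2}

/-- The Erdős–Rényi measure on edge-indicator functions. -/
noncomputable def erMeasure (n : ℕ) (r : ℝ) : Measure (EdgeIdx n → Bool) :=
  Measure.pi fun _ => bern r

instance (n : ℕ) (r : ℝ) : IsProbabilityMeasure (erMeasure n r) := by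
  unfold erMeasure; infer_instance

/-- Sample space for a random graph with node features. -/
abbrev GOmega (n d : ℕ) := (EdgeIdx n → Bool) × (Fin n → (Fin d → ℝ))

/-- Joint distribution of an ER graph and iid node features drawn from `D`. -/
noncomputable def graphMeasure (n : ℕ) (r : ℝ) {d : ℕ} (D : Measure (Fin d → ℝ))
    [IsProbabilityMeasure D] : Measure (GOmega n d) :=
  (erMeasure n r).prod (Measure.pi fun _ : Fin n => D)

/-- Adjacency relation determined by edge indicators. -/
def adjOf {n : ℕ} (e : EdgeIdx n → Bool) (u v : Fin n) : Bool :=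
  if h : u < v then e ⟨(u, v), h⟩ else if h' : v < u then e ⟨(v, u), h'⟩ else false

/-- (Open) neighbourhood of a node. -/
def nbhd {n : ℕ} (A : Fin n → Fin n → Bool) (v : Fin n) : Finset (Fin n) :=
  Finset.univ.filter fun u => A u v = true

/-- Degree of a node. -/
def deg {n : ℕ} (A : Fin n → Fin n → Bool) (v : Fin n) : ℕ := (nbhd A v).card

/-- Closed neighbourhood `N⁺(v) = N(v) ∪ {v}`. -/
def closedNbhd {n : ℕ} (A : Fin n → Fin n → Bool) (v : Fin n) : Finset (Fin n) :=
  insert v (nbhd A v)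

/-- `D` is a sub-Gaussian distribution on `ℝ^d`. -/
def SubGaussianVec {d : ℕ} (D : Measure (Fin d → ℝ)) : Prop :=
  ∃ C > 0, ∀ y : Fin d → ℝ, (∑ i, (y i) ^ 2) = 1 → ∀ t > 0,
    D {x | t ≤ |∑ i, x i * y i|} ≤ ENNReal.ofReal (2 * Real.exp (-(t ^ 2) / C ^ 2))

/-- Lipschitz continuity of a real function. -/
def RealLipschitz (σ : ℝ → ℝ) : Prop :=
  ∃ C > 0, ∀ a b : ℝ, |σ a - σ b| ≤ C * |a - b|

/-- A SumGNN⁺: a GNN with sum aggregation and global readout. -/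
structure SumGNN where
  T : ℕ
  d : ℕ → ℕ
  Ws : (t : ℕ) → Matrix (Fin (d (t + 1))) (Fin (d t)) ℝ
  Wn : (t : ℕ) → Matrix (Fin (d (t + 1))) (Fin (d t)) ℝ
  Wg : (t : ℕ) → Matrix (Fin (d (t + 1))) (Fin (d t)) ℝ
  b : (t : ℕ) → Fin (d (t + 1)) → ℝ
  σ : ℝ → ℝ

/-- Node embeddings computed by a SumGNN⁺. -/
noncomputable def SumGNN.embed (M : SumGNN) {n : ℕ} (A : Fin n → Fin n → Bool)
    (X : Fin n → Fin (M.d 0) → ℝ) : (t : ℕ) → Fin n → Fin (M.d t) → ℝ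
  | 0 => X
  | t + 1 => fun v i =>
      M.σ ((M.Ws t).mulVec (M.embed A X t v) i
          + (M.Wn t).mulVec (∑ u ∈ nbhd A v, M.embed A X t u) i
          + (M.Wg t).mulVec (∑ u : Fin n, M.embed A X t u) i
          + M.b t i)

/-- `σ` is eventually constant in both directions, with value `slo` towards `-∞`
and value `shi` towards `+∞`. -/
def EvConstBoth (σ : ℝ → ℝ) (slo shi : ℝ) : Prop :=
  ∃ xlo xhi : ℝ, (∀ y < xlo, σ y = slo) ∧ (∀ y > xhi, σ y = shi)

/-- The model `M` is synchronously saturating for edge probability `r`, feature mean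
`μ0`, and extremal non-linearity values `slo`, `shi`: condition (1) concerns the first
layer and condition (2) every later layer `1 < t ≤ T` (here the weights of the paper's
layer `t` are indexed by `t - 1`). -/
def SumGNN.SyncSaturating (M : SumGNN) (r : ℝ) (μ0 : Fin (M.d 0) → ℝ)
    (slo shi : ℝ) : Prop :=
  (∀ i : Fin (M.d 1), (r • M.Wn 0 + M.Wg 0).mulVec μ0 i ≠ 0) ∧
  (∀ t : ℕ, 1 ≤ t → t < M.T →
    ∀ z : Fin (M.d t) → ℝ, (∀ j, z j = slo ∨ z j = shi) →
      ∀ i : Fin (M.d (t + 1)), (r • M.Wn t + M.Wg t).mulVec z i ≠ 0)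

/-- Output of a SumGNN⁺ binary graph classifier with average pooling. -/
noncomputable def SumGNN.output (M : SumGNN) (c : (Fin (M.d M.T) → ℝ) → Bool) {n : ℕ}
    (A : Fin n → Fin n → Bool) (X : Fin n → Fin (M.d 0) → ℝ) : Bool :=
  c fun i => (n : ℝ)⁻¹ * ∑ v : Fin n, M.embed A X M.T v i

/-- The linearized sigmoid: `x ↦ -1` for `x < -1`, `x ↦ x` for `-1 ≤ x < 1`,
and `x ↦ 1` otherwise. -/
noncomputable def linSigmoid (x : ℝ) : ℝ :=
  if x < -1 then -1 else if x < 1 then x else 1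

/-- The uniform distribution `U[0,1]` on `ℝ`. -/
noncomputable def unif01 : Measure ℝ := volume.restrict (Set.Icc (0 : ℝ) 1)

instance : IsProbabilityMeasure unif01 :=
  ⟨by rw [unif01, Measure.restrict_apply_univ]; simp [Real.volume_Icc]⟩

/-- Node features with `d` iid `U[0,1]` coordinates. -/
noncomputable def unifFeat (d : ℕ) : Measure (Fin d → ℝ) := Measure.pi fun _ => unif01

instance (d : ℕ) : IsProbabilityMeasure (unifFeat d) := by
  unfold unifFeat; infer_instance

/-- A graph invariant: a Boolean function of (adjacency matrices of) finite simple
graphs which is invariant under isomorphism, i.e. under permutation of the nodes. -/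
def IsGraphInvariant (ξ : (n : ℕ) → (Fin n → Fin n → Bool) → Bool) : Prop :=
  ∀ (n : ℕ) (π : Equiv.Perm (Fin n)) (A : Fin n → Fin n → Bool),
    (∀ u v, A u v = A v u) → (∀ v, A v v = false) →
    ξ n (fun u v => A (π u) (π v)) = ξ n A

/-!
Because `ξ` obeys a zero-one law, there are `N` and `b` with `Pr(ξ(G) = b) ≥ 1 - δ` for all
`n > N`, so the network only has to compute `ξ` exactly on graphs with at most `N` nodes and may
output `b` on larger ones. One uniform feature per node, rounded to one of `K + 1` buckets,
gives the nodes pairwise distinct identifiers with probability at least `1 - n²/(K+1)`, and stays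
at distance `≥ 1/L` from the bucket boundaries, where the linearized sigmoid saturates, with
probability at least `1 - 2nK/L`. On that event the first layer writes the bucket of each node in
unary `±1` form, and the second records, for all buckets `j, k`, whether some node of bucket `j`
has a neighbour in bucket `k`, which buckets are occupied, and whether `n > N`. After mean pooling
these coordinates determine the graph up to relabelling, so the classifier recovers `ξ(G)` by
invariance.
-/

open Finset

lemma linSigmoid_of_one_le {x : ℝ} (h : 1 ≤ x) : linSigmoid x = 1 := by
  simp only [linSigmoid]
  split_ifs <;> linarith

lemma linSigmoid_of_le_neg_one {x : ℝ} (h : x ≤ -1) : linSigmoid x = -1 := by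
  simp only [linSigmoid]
  split_ifs <;> linarith

lemma linSigmoid_zero : linSigmoid 0 = 0 := by
  norm_num [linSigmoid]

lemma linSigmoid_of_one_le_abs {x : ℝ} (h : 1 ≤ |x|) :
    linSigmoid x = if 0 < x then 1 else -1 := by
  rcases le_abs'.1 h with h | h
  · rw [if_neg (by linarith), linSigmoid_of_le_neg_one (by linarith)]
  · rw [if_pos (by linarith), linSigmoid_of_one_le h]

lemma adjOf_symm {n : ℕ} (e : EdgeIdx n → Bool) (u v : Fin n) : adjOf e u v = adjOf e v u := by
  unfold adjOf
  rcases lt_trichotomy u v with h | rfl | h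
  · rw [dif_pos h, dif_neg (asymm h), dif_pos h]
  · rfl
  · rw [dif_neg (asymm h), dif_pos h, dif_pos h]

lemma adjOf_irrefl {n : ℕ} (e : EdgeIdx n → Bool) (v : Fin n) : adjOf e v v = false := by
  simp [adjOf]

section Buckets

variable (K : ℕ)

noncomputable def bucket (x : ℝ) : Fin (K + 1) :=
  ⟨min ⌊x * (K + 1)⌋₊ K, Nat.lt_succ_of_le (min_le_right _ _)⟩

def thresholdNbhd (L : ℝ) : Set ℝ :=
  ⋃ t ∈ Finset.Icc 1 K, Metric.ball ((t : ℝ) / (K + 1)) L⁻¹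

variable {K}

lemma lt_iff_le_bucket {x : ℝ} {t : ℕ} (ht : 1 ≤ t) (htK : t ≤ K) (hx : x ≠ t / (K + 1)) :
    (t : ℝ) / (K + 1) < x ↔ t ≤ bucket K x := by
  have hK : (0 : ℝ) < K + 1 := by positivity
  rw [bucket, Fin.val_mk, le_min_iff, Nat.le_floor_iff' (by omega), ← div_le_iff₀ hK,
    lt_iff_le_and_ne]
  simp [htK, Ne.symm hx]

lemma mem_Icc_bucket {x : ℝ} (hx : x ∈ Set.Icc (0 : ℝ) 1) :
    x ∈ Set.Icc ((bucket K x : ℝ) / (K + 1)) (((bucket K x : ℝ) + 1) / (K + 1)) := by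
  have hK : (0 : ℝ) < K + 1 := by positivity
  have hfloor := Nat.floor_le (mul_nonneg hx.1 hK.le)
  have hlt := Nat.lt_floor_add_one (x * (K + 1))
  rw [Set.mem_Icc, div_le_iff₀ hK, le_div_iff₀ hK, bucket, Fin.val_mk]
  rcases le_total ⌊x * (K + 1)⌋₊ K with h | h
  · rw [min_eq_left h]
    constructor <;> linarith
  · rw [min_eq_right h]
    have : (K : ℝ) ≤ ⌊x * (K + 1)⌋₊ := by exact_mod_cast h
    constructor <;> nlinarith [hx.2]

end Buckets

def goodFeatures (K : ℕ) (L : ℝ) (n : ℕ) : Set (Fin n → Fin 1 → ℝ) :=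
  {X | (∀ v, X v 0 ∉ thresholdNbhd K L) ∧ Function.Injective fun v => bucket K (X v 0)}

section LayerOne

noncomputable def layerOne (K : ℕ) (L x : ℝ) : Fin (K + 1) → ℝ := fun t =>
  if t = 0 then 1 else linSigmoid (L * (x - t / (K + 1)))

/-- The constant coordinate `0` stands in for the thresholds `t = 0`, always passed, and
`t = K + 1`, never passed. -/
noncomputable def stepRow (K t : ℕ) : Fin (K + 1) → ℝ :=
  if h : t ≤ K then Pi.single ⟨t, Nat.lt_succ_of_le h⟩ 1 else -Pi.single 0 1

noncomputable def bucketRow (K : ℕ) (j : Fin (K + 1)) : Fin (K + 1) → ℝ :=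
  (2 : ℝ)⁻¹ • (stepRow K j - stepRow K (j + 1))

variable {K : ℕ} {L x : ℝ}

lemma layerOne_zero : layerOne K L x 0 = 1 := if_pos rfl

lemma layerOne_of_ne_zero (hL : 0 < L) (hx : x ∉ thresholdNbhd K L) {t : Fin (K + 1)}
    (ht : t ≠ 0) : layerOne K L x t = if (t : ℕ) ≤ bucket K x then 1 else -1 := by
  have ht1 : 1 ≤ (t : ℕ) := Nat.one_le_iff_ne_zero.2 (Fin.val_ne_zero_iff.2 ht)
  have htK : (t : ℕ) ≤ K := Nat.le_of_lt_succ t.isLt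
  have hfar : L⁻¹ ≤ |x - t / (K + 1)| := not_lt.1 fun h =>
    hx (Set.mem_iUnion₂.2 ⟨t, Finset.mem_Icc.2 ⟨ht1, htK⟩, by rwa [Metric.mem_ball, Real.dist_eq]⟩)
  have hne : x ≠ t / (K + 1) := fun h => by
    rw [h, sub_self, abs_zero] at hfar
    linarith [inv_pos.2 hL]
  have hsat : 1 ≤ |L * (x - t / (K + 1))| := by
    rwa [abs_mul, abs_of_pos hL, ← inv_mul_le_iff₀ hL, mul_one]
  rw [layerOne, if_neg ht, linSigmoid_of_one_le_abs hsat]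
  refine if_congr ?_ rfl rfl
  rw [mul_pos_iff_of_pos_left hL, sub_pos]
  exact lt_iff_le_bucket ht1 htK hne

lemma stepRow_dotProduct_layerOne (hL : 0 < L) (hx : x ∉ thresholdNbhd K L) {t : ℕ}
    (ht : t ≤ K + 1) : stepRow K t ⬝ᵥ layerOne K L x = if t ≤ bucket K x then 1 else -1 := by
  rw [stepRow]
  split_ifs with htK hle hle
  · rw [single_one_dotProduct]
    rcases Nat.eq_zero_or_pos t with rfl | htpos
    · exact layerOne_zero
    · rw [layerOne_of_ne_zero hL hx (Fin.ne_of_val_ne (Nat.pos_iff_ne_zero.1 htpos)), if_pos hle]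
  · rw [single_one_dotProduct, layerOne_of_ne_zero hL hx, if_neg hle]
    exact Fin.ne_of_val_ne (by simpa using (by omega : t ≠ 0))
  · exact absurd (hle.trans (Nat.le_of_lt_succ (bucket K x).isLt)) htK
  · rw [neg_dotProduct, single_one_dotProduct, layerOne_zero]

lemma bucketRow_dotProduct_layerOne (hL : 0 < L) (hx : x ∉ thresholdNbhd K L)
    (j : Fin (K + 1)) : bucketRow K j ⬝ᵥ layerOne K L x = if bucket K x = j then 1 else 0 := by
  have hj := Nat.le_of_lt_succ j.isLt
  rw [bucketRow, smul_dotProduct, sub_dotProduct, stepRow_dotProduct_layerOne hL hx (by omega),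
    stepRow_dotProduct_layerOne hL hx (by omega)]
  simp only [Fin.ext_iff]
  split_ifs <;> first | omega | norm_num

end LayerOne

lemma inv_mul_sum_boole_ne_zero_iff {n : ℕ} (p : Fin n → Prop) [DecidablePred p] :
    (n : ℝ)⁻¹ * ∑ v, (if p v then 1 else 0 : ℝ) ≠ 0 ↔ ∃ v, p v := by
  simp only [sum_boole, ne_eq, mul_eq_zero, inv_eq_zero, Nat.cast_eq_zero, not_or, card_eq_zero,
    filter_eq_empty_iff, mem_univ, true_implies, not_forall, not_not]
  exact and_iff_right_of_imp fun ⟨v, _⟩ => v.pos.ne'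

lemma inv_mul_sum_sign_ne_neg_one_iff {n : ℕ} (hn : 0 < n) (p : Fin n → Prop) [DecidablePred p] :
    (n : ℝ)⁻¹ * ∑ v, (if p v then 1 else -1 : ℝ) ≠ -1 ↔ ∃ v, p v := by
  have hsign : ∀ v, (if p v then 1 else -1 : ℝ) = 2 * (if p v then 1 else 0) - 1 := by
    intro v; split_ifs <;> norm_num
  have hn' : (n : ℝ) ≠ 0 := by positivity
  rw [sum_congr rfl fun v _ => hsign v, sum_sub_distrib, ← mul_sum, sum_boole, sum_const,
    card_univ, Fintype.card_fin, nsmul_eq_mul, mul_one, Ne, inv_mul_eq_iff_eq_mul₀ hn',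
    mul_neg_one, sub_eq_neg_self, mul_eq_zero, Nat.cast_eq_zero, card_eq_zero,
    filter_eq_empty_iff]
  simp

lemma SumGNN.embed_succ_apply (M : SumGNN) {n : ℕ} (A : Fin n → Fin n → Bool)
    (X : Fin n → Fin (M.d 0) → ℝ) (t : ℕ) (v : Fin n) (i : Fin (M.d (t + 1))) :
    M.embed A X (t + 1) v i =
      M.σ (M.Ws t i ⬝ᵥ M.embed A X t v + M.Wn t i ⬝ᵥ ∑ u ∈ nbhd A v, M.embed A X t u
        + M.Wg t i ⬝ᵥ ∑ u, M.embed A X t u + M.b t i) :=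
  rfl

noncomputable def SumGNN.pool (M : SumGNN) {n : ℕ} (A : Fin n → Fin n → Bool)
    (X : Fin n → Fin (M.d 0) → ℝ) : Fin (M.d M.T) → ℝ :=
  fun i => (n : ℝ)⁻¹ * ∑ v, M.embed A X M.T v i

lemma SumGNN.output_eq_pool (M : SumGNN) (c : (Fin (M.d M.T) → ℝ) → Bool) {n : ℕ}
    (A : Fin n → Fin n → Bool) (X : Fin n → Fin (M.d 0) → ℝ) :
    M.output c A X = c (M.pool A X) :=
  rfl

/-- The coordinates of the second layer: `edge j k` detects a node of bucket `j` with a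
neighbour in bucket `k`, `occupied j` a node of bucket `j`, and `large` more than `N` nodes. -/
inductive Readout (K : ℕ)
  | edge (j k : Fin (K + 1))
  | occupied (j : Fin (K + 1))
  | large
  deriving DecidableEq, Fintype

namespace Readout

variable (K N : ℕ)

noncomputable def index : Readout K ≃ Fin (Fintype.card (Readout K)) := Fintype.equivFin _

/-- With at most `N` neighbours, the weight `2N + 2` and the bias `-(2N + 3)` make `edge j k`
saturate at `1` when the node is in bucket `j` and has a neighbour in bucket `k`, and at `-1`
otherwise. -/
noncomputable def selfRow : Readout K → Fin (K + 1) → ℝ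
  | edge j _ => (2 * N + 2 : ℝ) • bucketRow K j
  | occupied j => bucketRow K j
  | large => 0

noncomputable def neighbourRow : Readout K → Fin (K + 1) → ℝ
  | edge _ k => (2 : ℝ) • bucketRow K k
  | _ => 0

noncomputable def globalRow : Readout K → Fin (K + 1) → ℝ
  | large => (2 : ℝ) • Pi.single 0 1
  | _ => 0

def bias : Readout K → ℝ
  | edge _ _ => -(2 * N + 3)
  | occupied _ => 0
  | large => -(2 * N + 1)

end Readout

open Readout

noncomputable def bucketGNN (K : ℕ) (L : ℝ) (N : ℕ) : SumGNN where
  T := 2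
  d
    | 0 => 1
    | 1 => K + 1
    | _ + 2 => Fintype.card (Readout K)
  Ws
    | 0 => fun t _ => if t = 0 then 0 else L
    | 1 => fun i => selfRow K N ((index K).symm i)
    | _ + 2 => 0
  Wn
    | 0 => 0
    | 1 => fun i => neighbourRow K ((index K).symm i)
    | _ + 2 => 0
  Wg
    | 0 => 0
    | 1 => fun i => globalRow K ((index K).symm i)
    | _ + 2 => 0
  b
    | 0 => fun t => if t = 0 then 2 else -(L * t / (K + 1))
    | 1 => fun i => bias K N ((index K).symm i)
    | _ + 2 => 0
  σ := linSigmoid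

lemma IsGraphInvariant.apply_eq_of_equiv {ξ : (n : ℕ) → (Fin n → Fin n → Bool) → Bool}
    (hξ : IsGraphInvariant ξ) {m n : ℕ} (e : Fin m ≃ Fin n) {A : Fin n → Fin n → Bool}
    (hsymm : ∀ u v, A u v = A v u) (hirr : ∀ v, A v v = false) {B : Fin m → Fin m → Bool}
    (hB : ∀ a b, B a b = A (e a) (e b)) : ξ m B = ξ n A := by
  obtain rfl : m = n := by simpa using Fintype.card_congr e
  rw [← hξ m e A hsymm hirr]
  exact congrArg _ (funext₂ hB)

open Classical in
noncomputable def occupiedBuckets (K : ℕ) (y : Fin (Fintype.card (Readout K)) → ℝ) :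
    Finset (Fin (K + 1)) :=
  {j | y (index K (occupied j)) ≠ 0}

open Classical in
/-- The occupied buckets, numbered by `equivFin`, are the nodes of the decoded graph. -/
noncomputable def decode (ξ : (n : ℕ) → (Fin n → Fin n → Bool) → Bool) (b : Bool) (K : ℕ)
    (y : Fin (Fintype.card (Readout K)) → ℝ) : Bool :=
  if y (index K large) = 1 then b
  else
    ξ #(occupiedBuckets K y) fun a c =>
      decide (y (index K (edge ((occupiedBuckets K y).equivFin.symm a)
        ((occupiedBuckets K y).equivFin.symm c))) ≠ -1)

lemma decode_eq {ξ : (n : ℕ) → (Fin n → Fin n → Bool) → Bool} (hξ : IsGraphInvariant ξ)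
    (b : Bool) {K n : ℕ} {A : Fin n → Fin n → Bool} (hsymm : ∀ u v, A u v = A v u)
    (hirr : ∀ v, A v v = false) {β : Fin n → Fin (K + 1)} (hβ : Function.Injective β)
    {y : Fin (Fintype.card (Readout K)) → ℝ} (hlarge : y (index K large) ≠ 1)
    (hocc : ∀ j, y (index K (occupied j)) ≠ 0 ↔ j ∈ Set.range β)
    (hedge : ∀ v u, y (index K (edge (β v) (β u))) ≠ -1 ↔ A u v = true) :
    decode ξ b K y = ξ n A := by
  have hmem : ∀ j, j ∈ occupiedBuckets K y ↔ j ∈ Set.range β := by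
    simpa [occupiedBuckets] using hocc
  let e : Fin #(occupiedBuckets K y) ≃ Fin n :=
    (occupiedBuckets K y).equivFin.symm.trans
      ((Equiv.subtypeEquivRight hmem).trans (Equiv.ofInjective β hβ).symm)
  have hβe : ∀ a, β (e a) = (occupiedBuckets K y).equivFin.symm a := fun a =>
    Equiv.apply_ofInjective_symm hβ _
  rw [decode, if_neg hlarge]
  refine hξ.apply_eq_of_equiv e hsymm hirr fun a c => ?_
  rw [← hβe a, ← hβe c, hsymm, Bool.eq_iff_iff, decide_eq_true_iff]
  exact hedge (e a) (e c)

section BucketGNN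

variable {K N n : ℕ} {L : ℝ} (A : Fin n → Fin n → Bool) (X : Fin n → Fin 1 → ℝ)

lemma bucketGNN_embed_one (v : Fin n) (t : Fin (K + 1)) :
    (bucketGNN K L N).embed A X 1 v t = layerOne K L (X v 0) t := by
  refine (SumGNN.embed_succ_apply (bucketGNN K L N) A X 0 v t).trans ?_
  by_cases ht : t = 0
  · simp [bucketGNN, SumGNN.embed, layerOne, ht, dotProduct, linSigmoid_of_one_le]
  · simp [bucketGNN, SumGNN.embed, layerOne, ht, dotProduct]
    ring_nf
    exact congrArg _ (congrArg _ (Fin.sum_univ_one fun x => L * X v x))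

lemma bucketGNN_embed_two (v : Fin n) (r : Readout K) :
    (bucketGNN K L N).embed A X 2 v (index K r) =
      linSigmoid (selfRow K N r ⬝ᵥ layerOne K L (X v 0)
        + neighbourRow K r ⬝ᵥ ∑ u ∈ nbhd A v, layerOne K L (X u 0)
        + globalRow K r ⬝ᵥ ∑ u, layerOne K L (X u 0) + bias K N r) := by
  have h1 : (bucketGNN K L N).embed A X 1 = fun u => layerOne K L (X u 0) :=
    funext fun u => funext (bucketGNN_embed_one A X u)
  refine (SumGNN.embed_succ_apply (bucketGNN K L N) A X 1 v (index K r)).trans ?_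
  rw [h1]
  dsimp only [bucketGNN]
  rw [Equiv.symm_apply_apply]
  rfl

lemma bucketGNN_embed_two_edge (hL : 0 < L) (hX : ∀ u, X u 0 ∉ thresholdNbhd K L) (hn : n ≤ N)
    (v : Fin n) (j k : Fin (K + 1)) :
    (bucketGNN K L N).embed A X 2 v (index K (edge j k)) =
      if bucket K (X v 0) = j ∧ ∃ u ∈ nbhd A v, bucket K (X u 0) = k then 1 else -1 := by
  rw [bucketGNN_embed_two]
  simp only [selfRow, neighbourRow, globalRow, bias, smul_dotProduct, zero_dotProduct,
    dotProduct_sum, bucketRow_dotProduct_layerOne hL (hX _), smul_eq_mul, sum_const_zero,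
    add_zero, ← mul_sum, sum_boole]
  have hc : 1 ≤ #{u ∈ nbhd A v | bucket K (X u 0) = k} ↔ ∃ u ∈ nbhd A v, bucket K (X u 0) = k := by
    rw [Nat.one_le_iff_ne_zero, Ne, card_eq_zero, filter_eq_empty_iff]
    simp
  set c := #{u ∈ nbhd A v | bucket K (X u 0) = k}
  have hcN : (c : ℝ) ≤ N := by
    exact_mod_cast (card_filter_le _ _).trans ((card_le_univ _).trans (by simpa using hn))
  by_cases hv : bucket K (X v 0) = j <;> by_cases hu : ∃ u ∈ nbhd A v, bucket K (X u 0) = k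
  · rw [if_pos hv, if_pos ⟨hv, hu⟩]
    have : (1 : ℝ) ≤ c := by exact_mod_cast hc.2 hu
    exact linSigmoid_of_one_le (by linarith)
  · rw [if_pos hv, if_neg (fun h => hu h.2), Nat.lt_one_iff.1 (not_le.1 (mt hc.1 hu))]
    exact linSigmoid_of_le_neg_one (by push_cast; linarith)
  all_goals
    rw [if_neg hv, if_neg (fun h => hv h.1)]
    exact linSigmoid_of_le_neg_one (by linarith)

lemma bucketGNN_embed_two_occupied (hL : 0 < L) {v : Fin n} (hXv : X v 0 ∉ thresholdNbhd K L)
    (j : Fin (K + 1)) :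
    (bucketGNN K L N).embed A X 2 v (index K (occupied j)) =
      if bucket K (X v 0) = j then 1 else 0 := by
  rw [bucketGNN_embed_two]
  simp only [selfRow, neighbourRow, globalRow, bias, zero_dotProduct,
    bucketRow_dotProduct_layerOne hL hXv, add_zero]
  split_ifs
  exacts [linSigmoid_of_one_le le_rfl, linSigmoid_zero]

lemma bucketGNN_embed_two_large (v : Fin n) :
    (bucketGNN K L N).embed A X 2 v (index K large) = if N < n then 1 else -1 := by
  rw [bucketGNN_embed_two]
  simp only [selfRow, neighbourRow, globalRow, bias, zero_dotProduct, smul_dotProduct,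
    dotProduct_sum, single_one_dotProduct, layerOne_zero, sum_const, card_univ,
    Fintype.card_fin, nsmul_eq_mul, mul_one, smul_eq_mul, mul_zero, zero_add]
  split_ifs with h
  · have : (N : ℝ) + 1 ≤ n := by exact_mod_cast h
    exact linSigmoid_of_one_le (by linarith)
  · have : (n : ℝ) ≤ N := by exact_mod_cast not_lt.1 h
    exact linSigmoid_of_le_neg_one (by linarith)

lemma bucketGNN_pool_apply (r : Readout K) :
    (bucketGNN K L N).pool A X (index K r) =
      (n : ℝ)⁻¹ * ∑ v, (bucketGNN K L N).embed A X 2 v (index K r) :=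
  rfl

lemma bucketGNN_pool_large_eq_one_iff :
    (bucketGNN K L N).pool A X (index K large) = 1 ↔ N < n := by
  simp only [bucketGNN_pool_apply, bucketGNN_embed_two_large, sum_const, card_univ,
    Fintype.card_fin, nsmul_eq_mul]
  rcases Nat.eq_zero_or_pos n with rfl | hn
  · simp
  · rw [← mul_assoc, inv_mul_cancel₀ (by positivity), one_mul]
    split_ifs with h <;> norm_num [h]

lemma bucketGNN_pool_occupied_ne_zero_iff (hL : 0 < L) (hX : ∀ u, X u 0 ∉ thresholdNbhd K L)
    (j : Fin (K + 1)) :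
    (bucketGNN K L N).pool A X (index K (occupied j)) ≠ 0 ↔
      j ∈ Set.range fun v => bucket K (X v 0) := by
  simp only [bucketGNN_pool_apply, bucketGNN_embed_two_occupied A X hL (hX _)]
  exact inv_mul_sum_boole_ne_zero_iff _

lemma bucketGNN_pool_edge_ne_neg_one_iff (hL : 0 < L) (hX : ∀ u, X u 0 ∉ thresholdNbhd K L)
    (hn : n ≤ N) (hβ : Function.Injective fun v => bucket K (X v 0)) (v u : Fin n) :
    (bucketGNN K L N).pool A X (index K (edge (bucket K (X v 0)) (bucket K (X u 0)))) ≠ -1 ↔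
      A u v = true := by
  simp only [bucketGNN_pool_apply, bucketGNN_embed_two_edge A X hL hX hn]
  rw [inv_mul_sum_sign_ne_neg_one_iff v.pos]
  constructor
  · rintro ⟨v', hv', u', hu', hu'u⟩
    obtain rfl : v' = v := hβ hv'
    obtain rfl : u' = u := hβ hu'u
    simpa [nbhd] using hu'
  · exact fun h => ⟨v, rfl, u, by simpa [nbhd] using h, rfl⟩

lemma bucketGNN_output_of_lt (ξ : (n : ℕ) → (Fin n → Fin n → Bool) → Bool) (b : Bool)
    (hn : N < n) : (bucketGNN K L N).output (decode ξ b K) A X = b := by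
  refine (SumGNN.output_eq_pool (bucketGNN K L N) (decode ξ b K) A X).trans ?_
  exact if_pos ((bucketGNN_pool_large_eq_one_iff A X).2 hn)

lemma bucketGNN_output_of_le {ξ : (n : ℕ) → (Fin n → Fin n → Bool) → Bool}
    (hξ : IsGraphInvariant ξ) (b : Bool) (hL : 0 < L) (hn : n ≤ N)
    (hsymm : ∀ u v, A u v = A v u) (hirr : ∀ v, A v v = false) (hX : X ∈ goodFeatures K L n) :
    (bucketGNN K L N).output (decode ξ b K) A X = ξ n A := by
  refine (SumGNN.output_eq_pool (bucketGNN K L N) (decode ξ b K) A X).trans ?_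
  exact decode_eq hξ b hsymm hirr hX.2
    (mt (bucketGNN_pool_large_eq_one_iff A X).1 (not_lt.2 hn))
    (bucketGNN_pool_occupied_ne_zero_iff A X hL hX.1)
    (bucketGNN_pool_edge_ne_neg_one_iff A X hL hX.1 hn hX.2)

end BucketGNN

lemma MeasureTheory.Measure.pi_setOf_forall_mem_eq_pow {ι α : Type*} [Fintype ι]
    [MeasurableSpace α] (μ : Measure α) [IsProbabilityMeasure μ] (s : Finset ι) (B : Set α) :
    Measure.pi (fun _ : ι => μ) {X | ∀ i ∈ s, X i ∈ B} = μ B ^ #s := by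
  have : {X : ι → α | ∀ i ∈ s, X i ∈ B} = (s : Set ι).pi fun _ => B := by
    ext X
    simp [Set.mem_pi]
  rw [this, Measure.pi_pi_finset, prod_const]

lemma MeasureTheory.one_sub_measure_compl_le {α : Type*} [MeasurableSpace α] (μ : Measure α)
    [IsProbabilityMeasure μ] (s : Set α) : 1 - μ sᶜ ≤ μ s :=
  tsub_le_iff_right.2 (measure_univ (μ := μ) ▸ measure_univ_le_add_compl s)

section FeatureMeasure

variable {K n : ℕ} {L : ℝ}

lemma pi_unifFeat_one_setOf_forall_mem (s : Finset (Fin n)) (B : Set ℝ) :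
    Measure.pi (fun _ : Fin n => unifFeat 1) {X | ∀ v ∈ s, X v 0 ∈ B} = unif01 B ^ #s := by
  have h1 : unifFeat 1 {x | x 0 ∈ B} = unif01 B := by
    simpa [unifFeat] using Measure.pi_setOf_forall_mem_eq_pow unif01 (univ : Finset (Fin 1)) B
  rw [← h1]
  exact Measure.pi_setOf_forall_mem_eq_pow _ s {x : Fin 1 → ℝ | x 0 ∈ B}

lemma unif01_thresholdNbhd_le :
    unif01 (thresholdNbhd K L) ≤ ENNReal.ofReal (2 * K / L) :=
  calc unif01 (thresholdNbhd K L)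
      ≤ volume (thresholdNbhd K L) := Measure.restrict_apply_le _ _
    _ ≤ ∑ t ∈ Icc 1 K, volume (Metric.ball ((t : ℝ) / (K + 1)) L⁻¹) :=
      measure_biUnion_finset_le _ _
    _ = ENNReal.ofReal (2 * K / L) := by
      simp only [Real.volume_ball]
      rw [sum_const, Nat.card_Icc, Nat.add_sub_cancel, ← ENNReal.ofReal_nsmul,
        nsmul_eq_mul]
      ring_nf

lemma unif01_bucket_eq_le (m : Fin (K + 1)) :
    unif01 {x | bucket K x = m} ≤ ENNReal.ofReal (K + 1)⁻¹ := by
  rw [unif01, Measure.restrict_apply' measurableSet_Icc]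
  calc volume ({x | bucket K x = m} ∩ Set.Icc 0 1)
      ≤ volume (Set.Icc ((m : ℝ) / (K + 1)) ((m + 1) / (K + 1))) :=
        measure_mono fun x ⟨hx, hx01⟩ => by
          rw [← (hx : bucket K x = m)]
          exact mem_Icc_bucket hx01
    _ = ENNReal.ofReal (K + 1)⁻¹ := by
      rw [Real.volume_Icc]
      congr 1
      field_simp
      ring

lemma pi_unifFeat_one_bucket_collision_le (v w : Fin n) :
    Measure.pi (fun _ : Fin n => unifFeat 1)
      {X | v ≠ w ∧ bucket K (X v 0) = bucket K (X w 0)} ≤ ENNReal.ofReal (K + 1)⁻¹ := by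
  rcases eq_or_ne v w with rfl | hvw
  · simp
  calc Measure.pi (fun _ : Fin n => unifFeat 1) {X | v ≠ w ∧ bucket K (X v 0) = bucket K (X w 0)}
      ≤ Measure.pi (fun _ : Fin n => unifFeat 1)
          (⋃ m : Fin (K + 1),
            {X | ∀ u ∈ ({v, w} : Finset (Fin n)), X u 0 ∈ {x | bucket K x = m}}) :=
        measure_mono fun X ⟨_, h⟩ => Set.mem_iUnion.2 ⟨bucket K (X v 0), by simp [h]⟩
    _ ≤ ∑ m : Fin (K + 1), unif01 {x | bucket K x = m} ^ 2 := by
      refine (measure_iUnion_fintype_le _ _).trans (le_of_eq ?_)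
      simp only [pi_unifFeat_one_setOf_forall_mem, card_pair hvw]
    _ ≤ ∑ _m : Fin (K + 1), ENNReal.ofReal ((K + 1 : ℝ)⁻¹ ^ 2) := by
      gcongr with m
      rw [ENNReal.ofReal_pow (by positivity)]
      gcongr
      exact unif01_bucket_eq_le m
    _ = ENNReal.ofReal (K + 1)⁻¹ := by
      rw [sum_const, card_univ, Fintype.card_fin, ← ENNReal.ofReal_nsmul, nsmul_eq_mul]
      congr 1
      push_cast
      field_simp

lemma pi_unifFeat_one_goodFeatures_compl_le (hL : 0 < L) :
    Measure.pi (fun _ : Fin n => unifFeat 1) (goodFeatures K L n)ᶜ ≤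
      ENNReal.ofReal (n * (2 * K / L) + n ^ 2 / (K + 1)) := by
  have hcover : (goodFeatures K L n)ᶜ ⊆
      (⋃ v, {X | ∀ u ∈ ({v} : Finset (Fin n)), X u 0 ∈ thresholdNbhd K L}) ∪
        ⋃ p : Fin n × Fin n, {X | p.1 ≠ p.2 ∧ bucket K (X p.1 0) = bucket K (X p.2 0)} := by
    intro X hX
    simp only [goodFeatures, Set.mem_compl_iff, Set.mem_ofPred_eq, not_and_or, not_forall,
      not_not, Function.Injective] at hX
    rcases hX with ⟨v, hv⟩ | ⟨v, w, hvw, hne⟩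
    · exact Or.inl (Set.mem_iUnion.2 ⟨v, by simpa using hv⟩)
    · exact Or.inr (Set.mem_iUnion.2 ⟨(v, w), hne, hvw⟩)
  calc Measure.pi (fun _ : Fin n => unifFeat 1) (goodFeatures K L n)ᶜ
      ≤ ∑ v : Fin n, Measure.pi (fun _ : Fin n => unifFeat 1)
            {X | ∀ u ∈ ({v} : Finset (Fin n)), X u 0 ∈ thresholdNbhd K L} +
          ∑ p : Fin n × Fin n, Measure.pi (fun _ : Fin n => unifFeat 1)
            {X | p.1 ≠ p.2 ∧ bucket K (X p.1 0) = bucket K (X p.2 0)} :=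
        (measure_mono hcover).trans <| (measure_union_le _ _).trans <|
          add_le_add (measure_iUnion_fintype_le _ _) (measure_iUnion_fintype_le _ _)
    _ ≤ ∑ _v : Fin n, ENNReal.ofReal (2 * K / L) +
          ∑ _p : Fin n × Fin n, ENNReal.ofReal (K + 1)⁻¹ := by
      gcongr with v _ p
      · rw [pi_unifFeat_one_setOf_forall_mem, card_singleton, pow_one]
        exact unif01_thresholdNbhd_le
      · exact pi_unifFeat_one_bucket_collision_le p.1 p.2
    _ = ENNReal.ofReal (n * (2 * K / L) + n ^ 2 / (K + 1)) := by
      rw [sum_const, sum_const, card_univ, card_univ, Fintype.card_prod, Fintype.card_fin,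
        ← ENNReal.ofReal_nsmul, ← ENNReal.ofReal_nsmul,
        ← ENNReal.ofReal_add (by positivity) (by positivity), nsmul_eq_mul, nsmul_eq_mul]
      congr 1
      push_cast
      ring

end FeatureMeasure

lemma exists_eventually_one_sub_le_measure_eq {α : ℕ → Type*} [∀ n, MeasurableSpace (α n)]
    (μ : ∀ n, Measure (α n)) [∀ n, IsProbabilityMeasure (μ n)] (f : ∀ n, α n → Bool)
    (h : Tendsto (fun n => μ n {x | f n x = true}) atTop (𝓝 0) ∨
      Tendsto (fun n => μ n {x | f n x = true}) atTop (𝓝 1))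
    {ε : ℝ≥0∞} (hε : 0 < ε) : ∃ b, ∀ᶠ n in atTop, 1 - ε ≤ μ n {x | f n x = b} := by
  rcases h with h | h
  · refine ⟨false, (h.eventually_lt_const hε).mono fun n hn => ?_⟩
    have hcompl : {x | f n x = false}ᶜ = {x | f n x = true} := by ext; simp
    calc 1 - ε ≤ 1 - μ n {x | f n x = false}ᶜ := by rw [hcompl]; gcongr
      _ ≤ μ n {x | f n x = false} := one_sub_measure_compl_le _ _
  · exact ⟨true, (h.eventually_const_lt (ENNReal.sub_lt_self ENNReal.one_ne_top one_ne_zero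
      hε.ne')).mono fun n hn => hn.le⟩

lemma exists_bucket_params (N : ℕ) {δ : ℝ} (hδ : 0 < δ) :
    ∃ (K : ℕ) (L : ℝ), 0 < L ∧ ∀ n ≤ N, (n : ℝ) * (2 * K / L) + n ^ 2 / (K + 1) ≤ δ := by
  obtain ⟨K, hK⟩ := exists_nat_gt (2 * N ^ 2 / δ)
  refine ⟨K, 4 * N * K / δ + 1, by positivity, fun n hn => ?_⟩
  have hnN : (n : ℝ) ≤ N := by exact_mod_cast hn
  have h1 : (n : ℝ) * (2 * K / (4 * N * K / δ + 1)) ≤ δ / 2 := by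
    rw [mul_div_assoc', div_le_iff₀ (by positivity)]
    have : (n : ℝ) * (2 * K) ≤ N * (2 * K) := by gcongr
    field_simp
    nlinarith [Nat.cast_nonneg (α := ℝ) K, Nat.cast_nonneg (α := ℝ) n]
  have h2 : (n : ℝ) ^ 2 / (K + 1) ≤ δ / 2 := by
    rw [div_lt_iff₀ hδ] at hK
    rw [div_le_iff₀ (by positivity)]
    nlinarith [pow_le_pow_left₀ (Nat.cast_nonneg n) hnN 2]
  linarith

/-- **Uniform universal approximation by SumGNN⁺ with random node features**
(Theorem 3). If a graph invariant `ξ` satisfies a zero-one law with respect to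
`G(n, 1/2)`, then for every `δ > 0` there is a SumGNN⁺ with random node features
(non-linearity the linearized sigmoid, node features `d` iid `U[0,1]` coordinates)
which uniformly `δ`-approximates `ξ`: for every `n`, the probability over
`G ~ G(n, 1/2)` and the random features that the model output agrees with `ξ(G)`
is at least `1 - δ`. -/
theorem sumGNN_uniform_approximation
    (ξ : (n : ℕ) → (Fin n → Fin n → Bool) → Bool) (hinv : IsGraphInvariant ξ)
    (hξ : Tendsto (fun n =>
            erMeasure n (1 / 2) {e : EdgeIdx n → Bool | ξ n (adjOf e) = true})
          atTop (𝓝 (0 : ℝ≥0∞)) ∨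
          Tendsto (fun n =>
            erMeasure n (1 / 2) {e : EdgeIdx n → Bool | ξ n (adjOf e) = true})
          atTop (𝓝 (1 : ℝ≥0∞)))
    (δ : ℝ) (hδ : 0 < δ) :
    ∃ (M : SumGNN) (c : (Fin (M.d M.T) → ℝ) → Bool),
      M.σ = linSigmoid ∧
      ∀ n : ℕ,
        ENNReal.ofReal (1 - δ) ≤
          graphMeasure n (1 / 2) (unifFeat (M.d 0))
            {ω : GOmega n (M.d 0) | M.output c (adjOf ω.1) ω.2 = ξ n (adjOf ω.1)} := by
  obtain ⟨b, hb⟩ := exists_eventually_one_sub_le_measure_eq (fun n => erMeasure n (1 / 2))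
    (fun n e => ξ n (adjOf e)) hξ (ENNReal.ofReal_pos.2 hδ)
  obtain ⟨N, hN⟩ := eventually_atTop.1 hb
  obtain ⟨K, L, hL, hKL⟩ := exists_bucket_params N hδ
  refine ⟨bucketGNN K L N, decode ξ b K, rfl, fun n => ?_⟩
  rw [ENNReal.ofReal_sub 1 hδ.le, ENNReal.ofReal_one]
  rcases lt_or_ge N n with hn | hn
  · calc 1 - ENNReal.ofReal δ ≤ erMeasure n (1 / 2) {e | ξ n (adjOf e) = b} := hN n hn.le
      _ = graphMeasure n (1 / 2) (unifFeat 1) ({e | ξ n (adjOf e) = b} ×ˢ Set.univ) := by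
        rw [graphMeasure, Measure.prod_prod, measure_univ, mul_one]
      _ ≤ _ := measure_mono fun ω hω =>
        (bucketGNN_output_of_lt (adjOf ω.1) ω.2 ξ b hn).trans hω.1.symm
  · calc 1 - ENNReal.ofReal δ
        ≤ 1 - Measure.pi (fun _ : Fin n => unifFeat 1) (goodFeatures K L n)ᶜ := by
          gcongr
          exact (pi_unifFeat_one_goodFeatures_compl_le hL).trans
            (ENNReal.ofReal_le_ofReal (hKL n hn))
      _ ≤ Measure.pi (fun _ : Fin n => unifFeat 1) (goodFeatures K L n) :=
        one_sub_measure_compl_le _ _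
      _ = graphMeasure n (1 / 2) (unifFeat 1) (Set.univ ×ˢ goodFeatures K L n) := by
        rw [graphMeasure, Measure.prod_prod, measure_univ, one_mul]
      _ ≤ _ := measure_mono fun ω hω =>
        bucketGNN_output_of_le (adjOf ω.1) ω.2 hinv b hL hn (adjOf_symm ω.1) (adjOf_irrefl ω.1) hω.2
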